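/- (Explicit Uhlmann transform) Let |ψ₀⟩, |ψ₁⟩ be purifications of density matrices ρ₀, ρ₁ on H_A ⊗ H_R. Define U_⋆ := sgn^(SV)(Tr_A(|ψ₀⟩⟨ψ₁|)), the singular value transformation of X := Tr_A(|ψ₀⟩⟨ψ₁|) by the sign function. Then |⟨ψ₀| (I_A ⊗ U_⋆) |ψ₁⟩|² = F²(ρ₀,ρ₁). -/

import Mathlib

set_option linter.unusedSectionVars false
set_option maxHeartbeats 1000000


open Matrix ComplexOrder
open scoped Matrix.Norms.L2Operator Kronecker

noncomputable section

variable {m : Type*} [Fintype m] [DecidableEq m]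

/-- The square root of a positive semidefinite matrix (removed from Mathlib; old definition). -/
def Matrix.PosSemidef.sqrt {A : Matrix m m ℂ} (hA : A.PosSemidef) : Matrix m m ℂ :=
  hA.1.eigenvectorUnitary.1 * diagonal ((↑) ∘ Real.sqrt ∘ hA.1.eigenvalues) *
    (star hA.1.eigenvectorUnitary : Matrix m m ℂ)

/-- A density matrix: positive semidefinite with unit trace. -/
def IsDensity (ρ : Matrix m m ℂ) : Prop := ρ.PosSemidef ∧ ρ.trace = 1

/-- The trace norm `‖A‖₁ = Tr √(AᴴA)`. -/
def traceNorm (A : Matrix m m ℂ) : ℝ :=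
  ((Matrix.posSemidef_conjTranspose_mul_self A).sqrt).trace.re

/-- The trace distance `T(ρ,σ) = ‖ρ − σ‖₁ / 2`. -/
def traceDist (ρ σ : Matrix m m ℂ) : ℝ := traceNorm (ρ - σ) / 2

/-- The fidelity `F(ρ,σ) = ‖√ρ √σ‖₁`. -/
def fid {ρ σ : Matrix m m ℂ} (hρ : ρ.PosSemidef) (hσ : σ.PosSemidef) : ℝ :=
  traceNorm (hρ.sqrt * hσ.sqrt)

/-- The sign function applied to a Hermitian matrix via its spectral decomposition. -/
def signMat {A : Matrix m m ℂ} (hA : A.IsHermitian) : Matrix m m ℂ :=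
  hA.cfc (fun x => Real.sign x)

/-- The outer product `|ψ⟩⟨φ|`. -/
def outer (ψ φ : m → ℂ) : Matrix m m ℂ := Matrix.vecMulVec ψ (star φ)

variable {α β : Type*} [Fintype α] [DecidableEq α] [Fintype β] [DecidableEq β]

/-- Partial trace over the first (A) factor. -/
def ptraceA (M : Matrix (α × β) (α × β) ℂ) : Matrix β β ℂ :=
  Matrix.of fun r r' => ∑ a, M (a, r) (a, r')

/-- Partial trace over the second (R) factor. -/
def ptraceR (M : Matrix (α × β) (α × β) ℂ) : Matrix α α ℂ :=
  Matrix.of fun a a' => ∑ r, M (a, r) (a', r)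

open scoped MatrixOrder in
lemma Matrix.PosSemidef.sqrt_eq_cfcSqrt {A : Matrix m m ℂ} (hA : A.PosSemidef) :
    hA.sqrt = CFC.sqrt A := by
  have hA0 : 0 ≤ A := hA.nonneg
  rw [CFC.sqrt_eq_cfc, cfc_nnreal_eq_real _ A, hA.1.cfc_eq, IsHermitian.cfc,
    Unitary.conjStarAlgAut_apply, Matrix.PosSemidef.sqrt]
  congr 3
  funext x
  simp [Real.coe_sqrt, Real.coe_toNNReal', hA.eigenvalues_nonneg x]

open scoped MatrixOrder in
lemma Matrix.PosSemidef.posSemidef_sqrt {A : Matrix m m ℂ} (hA : A.PosSemidef) :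
    hA.sqrt.PosSemidef := by
  rw [hA.sqrt_eq_cfcSqrt]
  exact (CFC.sqrt_nonneg A).posSemidef

open scoped MatrixOrder in
lemma Matrix.PosSemidef.sqrt_mul_self {A : Matrix m m ℂ} (hA : A.PosSemidef) :
    hA.sqrt * hA.sqrt = A := by
  have hA0 : 0 ≤ A := hA.nonneg
  rw [hA.sqrt_eq_cfcSqrt]
  exact CFC.sqrt_mul_sqrt_self A

lemma Matrix.PosSemidef.sq_sqrt {A : Matrix m m ℂ} (hA : A.PosSemidef) :
    hA.sqrt ^ 2 = A := by
  rw [pow_two, hA.sqrt_mul_self]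

open scoped MatrixOrder in
lemma Matrix.PosSemidef.eq_sqrt_of_sq_eq {A : Matrix m m ℂ} (hA : A.PosSemidef)
    {B : Matrix m m ℂ} (hB : B.PosSemidef) (h : A ^ 2 = B) : A = hB.sqrt := by
  have hA0 : 0 ≤ A := hA.nonneg
  rw [hB.sqrt_eq_cfcSqrt, ← h]
  exact (CFC.sqrt_sq A).symm


lemma outer_eq_outR' {m : Type*} (a b : m → ℂ) : outer a b = Matrix.vecMulVec a (star b) := rfl

section helpers
/-- rectangular outer product -/
def outR {p q : Type*} (a : p → ℂ) (b : q → ℂ) : Matrix p q ℂ := Matrix.vecMulVec a (star b)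

lemma outer_eq_outR {m : Type*} (a b : m → ℂ) : outer a b = outR a b := rfl

section outR
variable {p q r t : Type*} [Fintype p] [Fintype q] [Fintype r] [Fintype t]

lemma outR_apply (a : p → ℂ) (b : q → ℂ) (i j) :
    outR a b i j = a i * (starRingEnd ℂ) (b j) := rfl

lemma outR_conjTranspose (a : p → ℂ) (b : q → ℂ) : (outR a b)ᴴ = outR b a := by
  ext i j; simp [outR_apply, conjTranspose_apply, mul_comm]

lemma outR_mul_outR (a : p → ℂ) (b c : q → ℂ) (d : r → ℂ) :
    outR a b * outR c d = (star b ⬝ᵥ c) • outR a d := by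
  ext i j
  simp only [mul_apply, outR_apply, Matrix.smul_apply, smul_eq_mul, dotProduct, Pi.star_apply,
    Finset.sum_mul, Finset.mul_sum, RCLike.star_def]
  congr 1; ext k; ring

lemma trace_outR (a b : p → ℂ) : (outR a b).trace = star b ⬝ᵥ a := by
  simp [trace, diag, outR_apply, dotProduct, mul_comm]

lemma outR_mulVec (a : p → ℂ) (b x : q → ℂ) : (outR a b) *ᵥ x = (star b ⬝ᵥ x) • a := by
  ext i
  simp [mulVec, outR_apply, dotProduct, Finset.mul_sum, mul_comm, mul_left_comm, mul_assoc]

lemma mul_outR (A : Matrix p q ℂ) (v : q → ℂ) (w : r → ℂ) :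
    A * outR v w = outR (A *ᵥ v) w := by
  ext i j
  simp only [mul_apply, outR_apply, mulVec, dotProduct, Finset.sum_mul]
  congr 1; ext k; ring

lemma outR_mul_conjTranspose (v : p → ℂ) (w : q → ℂ) (A : Matrix r q ℂ) :
    outR v w * Aᴴ = outR v (A *ᵥ w) := by
  ext i j
  simp only [mul_apply, outR_apply, conjTranspose_apply, mulVec, dotProduct, Finset.mul_sum,
    map_sum, _root_.map_mul, RCLike.star_def]
  congr 1; ext k; ring

lemma dot_star_comm (u x : p → ℂ) : star x ⬝ᵥ u = (starRingEnd ℂ) (star u ⬝ᵥ x) := by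
  simp [dotProduct, map_sum, mul_comm]

lemma sum_mulVec {ι : Type*} [Fintype ι] (M : ι → Matrix p q ℂ) (x : q → ℂ) :
    (∑ i, M i) *ᵥ x = ∑ i, M i *ᵥ x := by
  ext k
  simp [mulVec, dotProduct, Matrix.sum_apply, Finset.sum_mul]
  rw [Finset.sum_comm]

lemma dotProduct_sum' {ι : Type*} [Fintype ι] (x : p → ℂ) (y : ι → p → ℂ) :
    x ⬝ᵥ (∑ i, y i) = ∑ i, x ⬝ᵥ y i := by
  simp [dotProduct, Finset.sum_apply, Finset.mul_sum]
  rw [Finset.sum_comm]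

lemma posSemidef_sum_outR {ι : Type*} [Fintype ι] [DecidableEq p] (c : ι → ℝ)
    (hc : ∀ i, 0 ≤ c i) (u : ι → p → ℂ) :
    (∑ i, (c i : ℂ) • outR (u i) (u i)).PosSemidef := by
  refine Matrix.PosSemidef.of_dotProduct_mulVec_nonneg ?_ ?_
  · unfold Matrix.IsHermitian
    rw [conjTranspose_sum]
    refine Finset.sum_congr rfl fun i _ => ?_
    rw [conjTranspose_smul, outR_conjTranspose]
    simp
  · intro x
    rw [_root_.sum_mulVec, dotProduct_sum']
    refine Finset.sum_nonneg fun i _ => ?_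
    rw [smul_mulVec, outR_mulVec, dotProduct_smul, dotProduct_smul,
      dot_star_comm (u i) x]
    rw [smul_eq_mul, smul_eq_mul, Complex.mul_conj, ← Complex.ofReal_mul,
      Complex.zero_le_real]
    exact mul_nonneg (hc i) (Complex.normSq_nonneg _)

lemma sum_outR_mul_sum_outR {ι κ : Type*} [Fintype ι] [Fintype κ]
    (c : ι → ℂ) (d : κ → ℂ) (a : ι → p → ℂ) (b : ι → q → ℂ)
    (e : κ → q → ℂ) (f : κ → r → ℂ) :
    (∑ i, c i • outR (a i) (b i)) * (∑ k, d k • outR (e k) (f k))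
      = ∑ i, ∑ k, (c i * d k * (star (b i) ⬝ᵥ e k)) • outR (a i) (f k) := by
  rw [Matrix.sum_mul]
  refine Finset.sum_congr rfl fun i _ => ?_
  rw [Matrix.mul_sum]
  refine Finset.sum_congr rfl fun k _ => ?_
  rw [Matrix.smul_mul, Matrix.mul_smul, outR_mul_outR, smul_smul, smul_smul, mul_assoc]

end outR

section spectral
variable {n : Type*} [Fintype n] [DecidableEq n]

/-- the i-th column of the eigenvector unitary -/
def evCol {A : Matrix n n ℂ} (hA : A.IsHermitian) (i : n) : n → ℂ :=
  fun j => (hA.eigenvectorUnitary : Matrix n n ℂ) j i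

lemma UDU_eq_sum (U : Matrix n n ℂ) (d : n → ℂ) :
    U * Matrix.diagonal d * Uᴴ
      = ∑ i, d i • outR (fun j => U j i) (fun j => U j i) := by
  ext j k
  have key : ∀ x : n, (∑ x1, U j x1 * if x1 = x then d x1 else 0) = U j x * d x := by
    intro x
    rw [Finset.sum_eq_single x] <;> simp_all
  simp only [mul_apply, diagonal_apply, conjTranspose_apply, Matrix.sum_apply, Matrix.smul_apply,
    outR_apply, smul_eq_mul, RCLike.star_def, key]
  refine Finset.sum_congr rfl fun x _ => ?_
  ring

lemma spectral_sum {A : Matrix n n ℂ} (hA : A.IsHermitian) :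
    A = ∑ i, (hA.eigenvalues i : ℂ) • outR (evCol hA i) (evCol hA i) := by
  conv_lhs => rw [hA.spectral_theorem]
  rw [Unitary.conjStarAlgAut_apply, star_eq_conjTranspose, UDU_eq_sum]
  rfl

lemma one_eq_sum {A : Matrix n n ℂ} (hA : A.IsHermitian) :
    (1 : Matrix n n ℂ) = ∑ i, outR (evCol hA i) (evCol hA i) := by
  have h := (Matrix.mem_unitaryGroup_iff).mp hA.eigenvectorUnitary.2
  calc (1 : Matrix n n ℂ)
      = (hA.eigenvectorUnitary : Matrix n n ℂ) * Matrix.diagonal (fun _ => (1:ℂ))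
          * (hA.eigenvectorUnitary : Matrix n n ℂ)ᴴ := by
        rw [diagonal_one, mul_one, ← star_eq_conjTranspose, h]
    _ = _ := by
        rw [UDU_eq_sum]
        refine Finset.sum_congr rfl fun i _ => ?_
        rw [one_smul]
        rfl

lemma evCol_orthonormal {A : Matrix n n ℂ} (hA : A.IsHermitian) (i j : n) :
    star (evCol hA i) ⬝ᵥ evCol hA j = if i = j then 1 else 0 := by
  have h := (Matrix.mem_unitaryGroup_iff').mp hA.eigenvectorUnitary.2
  have h2 := congr_fun (congr_fun h i) j
  simp only [mul_apply, star_apply, one_apply] at h2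
  simpa [dotProduct, evCol, RCLike.star_def] using h2

lemma trace_sqrt_eq_sum {A : Matrix n n ℂ} (hA : A.PosSemidef) :
    hA.sqrt.trace = ∑ i, (Real.sqrt (hA.1.eigenvalues i) : ℂ) := by
  have h := (Matrix.mem_unitaryGroup_iff').mp hA.1.eigenvectorUnitary.2
  rw [Matrix.PosSemidef.sqrt, Matrix.trace_mul_cycle, h, one_mul, trace_diagonal]
  rfl

end spectral

section keylemma
variable {p q : Type*} [Fintype p] [DecidableEq p] [Fintype q] [DecidableEq q]

lemma trace_sqrt_congr {A B : Matrix p p ℂ} (h : A = B) (hA : A.PosSemidef)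
    (hB : B.PosSemidef) : hA.sqrt.trace = hB.sqrt.trace := by
  subst h; rfl

lemma trace_sqrt_transpose {P : Matrix p p ℂ} (hP : P.PosSemidef) (hPt : Pᵀ.PosSemidef) :
    hPt.sqrt.trace = hP.sqrt.trace := by
  have hsq : (hP.posSemidef_sqrt.transpose) = (hP.posSemidef_sqrt.transpose) := rfl
  have h2 : (hP.sqrt)ᵀ ^ 2 = Pᵀ := by
    rw [pow_two, ← Matrix.transpose_mul, ← pow_two, hP.sq_sqrt]
  have := (hP.posSemidef_sqrt.transpose).eq_sqrt_of_sq_eq hPt h2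
  rw [← this, Matrix.trace_transpose]

/-- Key lemma: `Tr √(AᴴA) = Tr √(AAᴴ)` for rectangular `A`. -/
lemma trace_sqrt_conjTranspose_mul_self (A : Matrix p q ℂ) :
    (Matrix.posSemidef_conjTranspose_mul_self A).sqrt.trace
      = (Matrix.posSemidef_self_mul_conjTranspose A).sqrt.trace := by
  set hH := Matrix.posSemidef_conjTranspose_mul_self A with hHdef
  set hG := Matrix.posSemidef_self_mul_conjTranspose A with hGdef
  set lam := hH.1.eigenvalues with hlam
  have hlam0 : ∀ i, 0 ≤ lam i := hH.eigenvalues_nonneg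
  set v : q → q → ℂ := fun i => evCol hH.1 i with hv
  have horth := evCol_orthonormal hH.1
  have hone := one_eq_sum hH.1
  have hspec := spectral_sum hH.1
  set u : q → p → ℂ := fun i => A *ᵥ v i with hu
  -- ⟨u i, u j⟩ = δᵢⱼ λⱼ
  have hHv : ∀ j, (Aᴴ * A) *ᵥ v j = (lam j : ℂ) • v j := by
    intro j
    rw [hspec, _root_.sum_mulVec]
    have : ∀ i, ((lam i : ℂ) • outR (v i) (v i)) *ᵥ v j
        = (if i = j then (lam j : ℂ) else 0) • v i := by
      intro i
      rw [smul_mulVec, outR_mulVec, horth, smul_smul]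
      by_cases h : i = j <;> simp [h]
    have this2 : ∀ i, (if i = j then (lam j : ℂ) else 0) • v i
        = if i = j then (lam j : ℂ) • v i else 0 := by
      intro i; split <;> simp
    rw [Finset.sum_congr rfl fun i _ => (this i).trans (this2 i), Finset.sum_eq_single j]
    · rw [if_pos rfl]
    · intro b _ hb; rw [if_neg hb]
    · intro h; exact absurd (Finset.mem_univ j) h
  have huu : ∀ i j, star (u i) ⬝ᵥ u j = if i = j then (lam j : ℂ) else 0 := by
    intro i j
    rw [hu]
    show star (A *ᵥ v i) ⬝ᵥ (A *ᵥ v j) = _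
    rw [star_mulVec, ← Matrix.dotProduct_mulVec, Matrix.mulVec_mulVec, hHv, dotProduct_smul,
      horth, smul_eq_mul]
    by_cases h : i = j <;> simp [h]
  -- G = Σ outer u u
  have hG_eq : A * Aᴴ = ∑ i, outR (u i) (u i) := by
    calc A * Aᴴ = A * (1 : Matrix q q ℂ) * Aᴴ := by rw [Matrix.mul_one]
      _ = ∑ i, A * outR (v i) (v i) * Aᴴ := by
          rw [hone, Matrix.mul_sum, Matrix.sum_mul]
      _ = ∑ i, outR (u i) (u i) := by
          refine Finset.sum_congr rfl fun i _ => ?_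
          rw [mul_outR, outR_mul_conjTranspose]
  -- u i = 0 when lam i = 0
  have hu0 : ∀ i, lam i = 0 → u i = 0 := by
    intro i h
    have := huu i i
    rw [if_pos rfl, h] at this
    exact dotProduct_star_self_eq_zero.mp (by simpa using this)
  set d : q → ℝ := fun i => (Real.sqrt (lam i))⁻¹ with hd
  have hd0 : ∀ i, 0 ≤ d i := fun i => inv_nonneg.mpr (Real.sqrt_nonneg _)
  set T := ∑ i, (d i : ℂ) • outR (u i) (u i) with hT
  have hTpsd : T.PosSemidef := posSemidef_sum_outR d hd0 u
  have hT2 : T ^ 2 = A * Aᴴ := by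
    rw [pow_two, hT, sum_outR_mul_sum_outR, hG_eq]
    refine Finset.sum_congr rfl fun i _ => ?_
    rw [Finset.sum_eq_single i]
    · rw [huu, if_pos rfl]
      by_cases h : lam i = 0
      · rw [hu0 i h]
        have hz : outR (0 : p → ℂ) (0 : p → ℂ) = 0 := by
          ext a b; simp [outR_apply]
        rw [hz, smul_zero]
      · have hs : Real.sqrt (lam i) ≠ 0 :=
          Real.sqrt_ne_zero'.mpr (lt_of_le_of_ne (hlam0 i) (Ne.symm h))
        have hco : (d i : ℂ) * (d i : ℂ) * (lam i : ℂ) = 1 := by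
          rw [← Complex.ofReal_mul, ← Complex.ofReal_mul, ← Complex.ofReal_one]
          congr 1
          show (Real.sqrt (lam i))⁻¹ * (Real.sqrt (lam i))⁻¹ * lam i = 1
          rw [← mul_inv, Real.mul_self_sqrt (hlam0 i)]
          exact inv_mul_cancel₀ h
        rw [hco, one_smul]
    · intro j _ hji
      rw [huu, if_neg hji.symm, mul_zero, zero_smul]
    · intro h
      exact absurd (Finset.mem_univ i) h
  have hsqrtG : hG.sqrt = T := ((hTpsd.eq_sqrt_of_sq_eq hG hT2)).symm
  have htrT : T.trace = ∑ i, (Real.sqrt (lam i) : ℂ) := by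
    rw [hT, Matrix.trace_sum]
    refine Finset.sum_congr rfl fun i _ => ?_
    rw [Matrix.trace_smul, trace_outR]
    rw [huu, if_pos rfl, smul_eq_mul, ← Complex.ofReal_mul]
    congr 1
    by_cases h : lam i = 0
    · simp [hd, h]
    · have hs : Real.sqrt (lam i) ≠ 0 :=
        Real.sqrt_ne_zero'.mpr (lt_of_le_of_ne (hlam0 i) (Ne.symm h))
      show (Real.sqrt (lam i))⁻¹ * lam i = Real.sqrt (lam i)
      rw [inv_mul_eq_iff_eq_mul₀ hs]
      exact (Real.mul_self_sqrt (hlam0 i)).symm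
  rw [trace_sqrt_eq_sum hH, hsqrtG, htrT]

end keylemma


end helpers

section mainhelpers
variable {α β : Type*} [Fintype α] [DecidableEq α] [Fintype β] [DecidableEq β]

lemma collapse {ι p q : Type*} [Fintype ι] [DecidableEq ι] [Fintype p] [Fintype q]
    (c d : ι → ℂ) (g : ι → ι → ℂ) (hg : ∀ i k, g i k = if i = k then 1 else 0)
    (a : ι → p → ℂ) (f : ι → q → ℂ) :
    ∑ i, ∑ k, (c i * d k * g i k) • outR (a i) (f k)
      = ∑ i, (c i * d i) • outR (a i) (f i) := by
  refine Finset.sum_congr rfl fun i _ => ?_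
  rw [Finset.sum_eq_single i]
  · rw [hg, if_pos rfl, mul_one]
  · intro k _ hk
    rw [hg, if_neg (fun h => hk h.symm), mul_zero, zero_smul]
  · exact fun h => absurd (Finset.mem_univ i) h

lemma kron_inner (U : Matrix β β ℂ) (ψ₀ ψ₁ : α × β → ℂ) :
    star ψ₀ ⬝ᵥ (((1 : Matrix α α ℂ) ⊗ₖ U) *ᵥ ψ₁)
      = (U * (ptraceA (outR ψ₀ ψ₁))ᴴ).trace := by
  have lhs_eq : star ψ₀ ⬝ᵥ (((1 : Matrix α α ℂ) ⊗ₖ U) *ᵥ ψ₁)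
      = ∑ a : α, ∑ r : β, ∑ r' : β,
          (starRingEnd ℂ) (ψ₀ (a, r)) * (U r r' * ψ₁ (a, r')) := by
    simp only [dotProduct, mulVec, Pi.star_apply, RCLike.star_def]
    rw [Fintype.sum_prod_type]
    refine Finset.sum_congr rfl fun a _ => Finset.sum_congr rfl fun r _ => ?_
    have inner_eq : (∑ y : α × β, ((1 : Matrix α α ℂ) ⊗ₖ U) (a, r) y * ψ₁ y)
        = ∑ r' : β, U r r' * ψ₁ (a, r') := by
      rw [Fintype.sum_prod_type]
      rw [Finset.sum_eq_single a]
      · refine Finset.sum_congr rfl fun r' _ => ?_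
        simp [Matrix.kroneckerMap_apply, Matrix.one_apply]
      · intro b _ hb
        refine Finset.sum_eq_zero fun r' _ => ?_
        simp [Matrix.kroneckerMap_apply, Matrix.one_apply, Ne.symm hb]
      · exact fun h => absurd (Finset.mem_univ a) h
    show (starRingEnd ℂ) (ψ₀ (a, r)) * (∑ y : α × β, ((1 : Matrix α α ℂ) ⊗ₖ U) (a, r) y * ψ₁ y)
        = _
    rw [inner_eq, Finset.mul_sum]
  have rhs_eq : (U * (ptraceA (outR ψ₀ ψ₁))ᴴ).trace
      = ∑ r : β, ∑ r' : β, U r r' * ∑ a : α, ((starRingEnd ℂ) (ψ₀ (a, r)) * ψ₁ (a, r')) := by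
    rw [Matrix.trace]
    simp only [Matrix.diag_apply, mul_apply, conjTranspose_apply, ptraceA, Matrix.of_apply,
      outR_apply, map_sum, _root_.map_mul, RCLike.star_def, Complex.conj_conj]
  rw [lhs_eq, rhs_eq, Finset.sum_comm]
  refine Finset.sum_congr rfl fun r _ => ?_
  rw [Finset.sum_comm]
  refine Finset.sum_congr rfl fun r' _ => ?_
  rw [Finset.mul_sum]
  exact Finset.sum_congr rfl fun a _ => by ring

lemma transpose_conj_mul {p : Type*} [Fintype p] (D : Matrix p p ℂ) :
    (Dᵀ)ᴴ * Dᵀ = (D * Dᴴ)ᵀ := by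
  ext i j
  simp only [mul_apply, conjTranspose_apply, transpose_apply]
  exact Finset.sum_congr rfl fun k _ => mul_comm _ _

theorem explicit_uhlmann_transform'
    {ρ₀ ρ₁ : Matrix α α ℂ} (h₀ : ρ₀.PosSemidef) (h₁ : ρ₁.PosSemidef)
    (ψ₀ ψ₁ : α × β → ℂ)
    (hψ₀ : ptraceR (outR ψ₀ ψ₀) = ρ₀) (hψ₁ : ptraceR (outR ψ₁ ψ₁) = ρ₁)
    {J : Type*} [Fintype J] [DecidableEq J] (s : J → ℝ) (L Rv : J → β → ℂ)
    (hs : ∀ j, 0 ≤ s j)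
    (hL : ∀ j k, star (L j) ⬝ᵥ L k = if j = k then 1 else 0)
    (hR : ∀ j k, star (Rv j) ⬝ᵥ Rv k = if j = k then 1 else 0)
    (hX : ptraceA (outR ψ₀ ψ₁) = ∑ j, (s j : ℂ) • outR (L j) (Rv j)) :
    (‖(star ψ₀ ⬝ᵥ
        (((1 : Matrix α α ℂ) ⊗ₖ (∑ j, (Real.sign (s j) : ℂ) • outR (L j) (Rv j))).mulVec
          ψ₁))‖) ^ 2
      = (((Matrix.posSemidef_conjTranspose_mul_self
            (h₀.sqrt * h₁.sqrt)).sqrt).trace.re) ^ 2 := by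
  classical
  set M₀ : Matrix α β ℂ := Matrix.of (fun a r => ψ₀ (a, r)) with hM₀
  set M₁ : Matrix α β ℂ := Matrix.of (fun a r => ψ₁ (a, r)) with hM₁
  have hρ₀M : ρ₀ = M₀ * M₀ᴴ := by
    rw [← hψ₀]; ext a a'
    simp only [ptraceR, Matrix.of_apply, outR_apply, mul_apply, conjTranspose_apply,
      RCLike.star_def, hM₀]
  have hρ₁M : ρ₁ = M₁ * M₁ᴴ := by
    rw [← hψ₁]; ext a a'
    simp only [ptraceR, Matrix.of_apply, outR_apply, mul_apply, conjTranspose_apply,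
      RCLike.star_def, hM₁]
  set t : ℝ := ∑ j, s j with ht
  have ht0 : 0 ≤ t := Finset.sum_nonneg fun j _ => hs j
  have hXH : (ptraceA (outR ψ₀ ψ₁))ᴴ = ∑ j, (s j : ℂ) • outR (Rv j) (L j) := by
    rw [hX, conjTranspose_sum]
    refine Finset.sum_congr rfl fun j _ => ?_
    rw [conjTranspose_smul, outR_conjTranspose, RCLike.star_def, Complex.conj_ofReal]
  -- Step 1 : the inner product equals (t : ℂ)
  have hinner : star ψ₀ ⬝ᵥ
      (((1 : Matrix α α ℂ) ⊗ₖ (∑ j, (Real.sign (s j) : ℂ) • outR (L j) (Rv j))) *ᵥ ψ₁)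
      = (t : ℂ) := by
    rw [kron_inner, hXH, sum_outR_mul_sum_outR,
      collapse _ _ _ hR, Matrix.trace_sum]
    have term : ∀ j, (((Real.sign (s j) : ℂ) * (s j : ℂ)) • outR (L j) (L j)).trace
        = ((s j : ℝ) : ℂ) := by
      intro j
      rw [Matrix.trace_smul, trace_outR, hL, if_pos rfl, smul_eq_mul, mul_one,
        ← Complex.ofReal_mul]
      congr 1
      rcases eq_or_lt_of_le (hs j) with h | h
      · rw [← h]; simp
      · rw [Real.sign_of_pos h, one_mul]
    rw [Finset.sum_congr rfl fun j _ => term j, ht]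
    push_cast
    rfl
  -- Step 2 : trace of sqrt of XᴴX equals (t : ℂ)
  set X := ptraceA (outR ψ₀ ψ₁) with hXdef
  set Q := ∑ j, (s j : ℂ) • outR (Rv j) (Rv j) with hQ
  have hQpsd : Q.PosSemidef := posSemidef_sum_outR s hs Rv
  have hXpsd : (Xᴴ * X).PosSemidef := Matrix.posSemidef_conjTranspose_mul_self X
  have hQ2 : Q ^ 2 = Xᴴ * X := by
    rw [pow_two, hQ, sum_outR_mul_sum_outR, collapse _ _ _ hR]
    rw [hXH, hX, sum_outR_mul_sum_outR, collapse _ _ _ hL]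
  have hsq : hXpsd.sqrt = Q := (hQpsd.eq_sqrt_of_sq_eq hXpsd hQ2).symm
  have htrQ : Q.trace = (t : ℂ) := by
    rw [hQ, Matrix.trace_sum]
    have term : ∀ j, ((s j : ℂ) • outR (Rv j) (Rv j)).trace = ((s j : ℝ) : ℂ) := by
      intro j
      rw [Matrix.trace_smul, trace_outR, hR, if_pos rfl, smul_eq_mul, mul_one]
    rw [Finset.sum_congr rfl fun j _ => term j, ht]
    push_cast
    rfl
  -- Step 3 : chain of trace equalities to fidelity
  set W := h₀.sqrt * h₁.sqrt with hW
  set D := M₁ᴴ * M₀ with hD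
  set B := h₁.sqrt * M₀ with hB
  have m1 : X = Dᵀ := by
    ext r r'
    simp only [hXdef, ptraceA, Matrix.of_apply, outR_apply, transpose_apply, hD, mul_apply,
      conjTranspose_apply, RCLike.star_def, hM₀, hM₁]
    exact Finset.sum_congr rfl fun a _ => mul_comm _ _
  have m2 : Xᴴ * X = (D * Dᴴ)ᵀ := by rw [m1, transpose_conj_mul]
  have m3 : D * Dᴴ = (Dᴴ)ᴴ * Dᴴ := by rw [conjTranspose_conjTranspose]
  have m4 : Dᴴ * (Dᴴ)ᴴ = Bᴴ * B := by
    rw [conjTranspose_conjTranspose, hD, hB, conjTranspose_mul, conjTranspose_conjTranspose,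
      conjTranspose_mul, h₁.posSemidef_sqrt.1]
    calc M₀ᴴ * M₁ * (M₁ᴴ * M₀)
        = M₀ᴴ * (M₁ * M₁ᴴ) * M₀ := by rw [Matrix.mul_assoc, Matrix.mul_assoc, Matrix.mul_assoc]
      _ = M₀ᴴ * ρ₁ * M₀ := by rw [← hρ₁M]
      _ = M₀ᴴ * (h₁.sqrt * h₁.sqrt) * M₀ := by rw [h₁.sqrt_mul_self]
      _ = M₀ᴴ * h₁.sqrt * (h₁.sqrt * M₀) := by
          rw [Matrix.mul_assoc, Matrix.mul_assoc, Matrix.mul_assoc]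
  have m5 : B * Bᴴ = Wᴴ * W := by
    rw [hB, hW, conjTranspose_mul, h₁.posSemidef_sqrt.1, conjTranspose_mul,
      h₁.posSemidef_sqrt.1, h₀.posSemidef_sqrt.1]
    calc h₁.sqrt * M₀ * (M₀ᴴ * h₁.sqrt)
        = h₁.sqrt * (M₀ * M₀ᴴ) * h₁.sqrt := by
          rw [Matrix.mul_assoc, Matrix.mul_assoc, Matrix.mul_assoc]
      _ = h₁.sqrt * ρ₀ * h₁.sqrt := by rw [← hρ₀M]
      _ = h₁.sqrt * (h₀.sqrt * h₀.sqrt) * h₁.sqrt := by rw [h₀.sqrt_mul_self]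
      _ = h₁.sqrt * h₀.sqrt * (h₀.sqrt * h₁.sqrt) := by
          rw [Matrix.mul_assoc, Matrix.mul_assoc, Matrix.mul_assoc]
  have key : hXpsd.sqrt.trace
      = (Matrix.posSemidef_conjTranspose_mul_self W).sqrt.trace :=
    calc hXpsd.sqrt.trace
        = ((Matrix.posSemidef_self_mul_conjTranspose D).transpose).sqrt.trace :=
          trace_sqrt_congr m2 _ _
      _ = (Matrix.posSemidef_self_mul_conjTranspose D).sqrt.trace :=
          trace_sqrt_transpose _ _
      _ = (Matrix.posSemidef_conjTranspose_mul_self Dᴴ).sqrt.trace :=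
          trace_sqrt_congr m3 _ _
      _ = (Matrix.posSemidef_self_mul_conjTranspose Dᴴ).sqrt.trace :=
          trace_sqrt_conjTranspose_mul_self Dᴴ
      _ = (Matrix.posSemidef_conjTranspose_mul_self B).sqrt.trace :=
          trace_sqrt_congr m4 _ _
      _ = (Matrix.posSemidef_self_mul_conjTranspose B).sqrt.trace :=
          trace_sqrt_conjTranspose_mul_self B
      _ = (Matrix.posSemidef_conjTranspose_mul_self W).sqrt.trace :=
          trace_sqrt_congr m5 _ _
  have hfid : (Matrix.posSemidef_conjTranspose_mul_self W).sqrt.trace.re = t := by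
    rw [← key, hsq, htrQ, Complex.ofReal_re]
  rw [hinner, hfid]
  rw [Complex.norm_real, Real.norm_of_nonneg ht0]


end mainhelpers

/-- explicit Uhlmann transform: for `X = Tr_A(|ψ₀⟩⟨ψ₁|)` with
SVD `X = Σⱼ sⱼ|Lⱼ⟩⟨Rⱼ|`, the unitary `U⋆ = sgn^(SV)(X) = Σⱼ sgn(sⱼ)|Lⱼ⟩⟨Rⱼ|`
satisfies `|⟨ψ₀|(I ⊗ U⋆)|ψ₁⟩|² = F²(ρ₀,ρ₁)`. -/
theorem explicit_uhlmann_transform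
    {ρ₀ ρ₁ : Matrix α α ℂ} (h₀ : IsDensity ρ₀) (h₁ : IsDensity ρ₁)
    (ψ₀ ψ₁ : α × β → ℂ)
    (hψ₀unit : star ψ₀ ⬝ᵥ ψ₀ = 1) (hψ₁unit : star ψ₁ ⬝ᵥ ψ₁ = 1)
    (hψ₀ : ptraceR (outer ψ₀ ψ₀) = ρ₀) (hψ₁ : ptraceR (outer ψ₁ ψ₁) = ρ₁)
    {J : Type*} [Fintype J] [DecidableEq J] (s : J → ℝ) (L Rv : J → β → ℂ)
    (hs : ∀ j, 0 ≤ s j)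
    (hL : ∀ j k, star (L j) ⬝ᵥ L k = if j = k then 1 else 0)
    (hR : ∀ j k, star (Rv j) ⬝ᵥ Rv k = if j = k then 1 else 0)
    (hX : ptraceA (outer ψ₀ ψ₁) = ∑ j, (s j : ℂ) • outer (L j) (Rv j)) :
    (‖(star ψ₀ ⬝ᵥ
        (((1 : Matrix α α ℂ) ⊗ₖ (∑ j, (Real.sign (s j) : ℂ) • outer (L j) (Rv j))).mulVec
          ψ₁))‖) ^ 2 = (fid h₀.1 h₁.1) ^ 2 := by
  exact explicit_uhlmann_transform' h₀.1 h₁.1 ψ₀ ψ₁ hψ₀ hψ₁ s L Rv hs hL hR hX
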